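/- arXiv:2006.04485 — 3 statements merged into one kernel-verified Lean document; each statement's English description precedes it below -/
import Mathlib

section
/- Let (X_n) be a sequence of non-empty sets and, for each k, n ∈ ℕ, let f_n^{(k)} : X_n → [0,∞] be a function. Define f^{(k)} : ∏_n X_n → [0,∞] by f^{(k)}(x₁, x₂, …) = limsup_n f_n^{(k)}(x_n). If for every ε > 0 and every k₀ ∈ ℕ there exists x ∈ ∏_n X_n such that f^{(k)}(x) < ε for all k = 1, …, k₀, then there exists y ∈ ∏_n X_n such that f^{(k)}(y) = 0 for all k ∈ ℕ. -/
/-!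
For each `m`, the hypothesis with `ε = m⁻¹` and `k₀ = m` gives a sequence `x m` whose first `m`
limsups are below `m⁻¹`, so that `f k n (x m n) < m⁻¹` for all `k ≤ m` once `n` is large.
A diagonal sequence `y n = x (g n) n`, where `g n` is the largest `m ≤ n` for which this already
holds at `n`, has `g n → ∞`, so each `f k n (y n)` is eventually squeezed below
`(g n)⁻¹ → 0`.
-/

open Filter Topology

theorem Nat.exists_tendsto_atTop_eventually_diagonal {P : ℕ → ℕ → Prop}
    (hP : ∀ m, ∀ᶠ n in atTop, P m n) :
    ∃ g : ℕ → ℕ, Tendsto g atTop atTop ∧ ∀ᶠ n in atTop, P (g n) n := by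
  classical
  refine ⟨fun n => Nat.findGreatest (P · n) n, tendsto_atTop.2 fun m => ?_, ?_⟩
  · filter_upwards [hP m, eventually_ge_atTop m] with n hPn hmn
    exact Nat.le_findGreatest hmn hPn
  · filter_upwards [hP 0] with n hPn
    exact Nat.findGreatest_spec (P := (P · n)) n.zero_le hPn

theorem eventually_forall_le_of_limsup_lt {α β : Type*} [CompleteLinearOrder β] {l : Filter α}
    {u : ℕ → α → β} {m : ℕ} {ε : β} (h : ∀ k ≤ m, limsup (u k) l < ε) :
    ∀ᶠ a in l, ∀ k ≤ m, u k a < ε :=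
  (eventually_all_finite (Set.finite_Iic m)).2 fun k hk => eventually_lt_of_limsup_lt (h k hk)

theorem kirchberg_eps_test_general (X : ℕ → Type*)
    (f : ℕ → ∀ n, X n → ENNReal)
    (H : ∀ ε : ENNReal, 0 < ε → ∀ k₀ : ℕ, ∃ x : ∀ n, X n,
      ∀ k ≤ k₀, Filter.limsup (fun n => f k n (x n)) atTop < ε) :
    ∃ y : ∀ n, X n, ∀ k : ℕ, Filter.limsup (fun n => f k n (y n)) atTop = 0 := by
  choose x hx using fun m : ℕ => H (m : ENNReal)⁻¹ (ENNReal.inv_pos.2 (ENNReal.natCast_ne_top m)) m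
  obtain ⟨g, hg, hgood⟩ := Nat.exists_tendsto_atTop_eventually_diagonal
    (P := fun m n => ∀ k ≤ m, f k n (x m n) < (m : ENNReal)⁻¹)
    fun m => eventually_forall_le_of_limsup_lt (u := fun k n => f k n (x m n)) (hx m)
  refine ⟨fun n => x (g n) n, fun k => Tendsto.limsup_eq ?_⟩
  refine tendsto_of_tendsto_of_tendsto_of_le_of_le' tendsto_const_nhds
    (ENNReal.tendsto_inv_nat_nhds_zero.comp hg) (Eventually.of_forall fun _ => zero_le) ?_
  filter_upwards [hgood, tendsto_atTop.1 hg k] with n hn hkn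
  exact (hn k hkn).le

/-- **Kirchberg's ε-test** (sequence-algebra form). -/
theorem kirchberg_eps_test (X : ℕ → Type*) (hX : ∀ n, Nonempty (X n))
    (f : ℕ → ∀ n, X n → ENNReal)
    (H : ∀ ε : ENNReal, 0 < ε → ∀ k₀ : ℕ, ∃ x : ∀ n, X n,
      ∀ k ≤ k₀, Filter.limsup (fun n => f k n (x n)) atTop < ε) :
    ∃ y : ∀ n, X n, ∀ k : ℕ, Filter.limsup (fun n => f k n (y n)) atTop = 0 :=
  kirchberg_eps_test_general X f H
end

section
/- Let n ≥ 1 and let a ∈ M_n(ℂ) be self-adjoint. Then there exist a self-adjoint c ∈ M_n(ℂ) with ‖c‖ ≤ |tr_n(a)| and matrices x, y ∈ M_n(ℂ) such that a = c + [x, y], where tr_n is the normalized trace and [x, y] = xy − yx. In fact one may take c = tr_n(a)·1. -/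
open scoped Matrix.Norms.L2Operator

/-! Subtracting `tr_n(a) • 1` leaves a traceless Hermitian matrix, which is unitarily conjugate to
a diagonal matrix `diagonal d` with `∑ i, d i = 0`. If `s` are the partial sums of `d` and `σ` is a
cyclic permutation, then `d = s - s ∘ σ`, and conjugating `diagonal s` by the permutation matrix
`P` of `σ` gives `diagonal s - diagonal (s ∘ σ) = [diagonal s * P⁻¹, P]`. -/

open Matrix Equiv

theorem Fin.partialSum_last {G : Type*} [AddCommMonoid G] {m : ℕ} (d : Fin m → G) :
    Fin.partialSum d (Fin.last m) = ∑ i, d i := by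
  rw [Fin.partialSum, Fin.val_last, List.take_of_length_le (by simp), List.sum_ofFn]

theorem Fin.exists_sub_comp_finRotate_symm_eq {G : Type*} [AddCommGroup G] {m : ℕ}
    (d : Fin (m + 1) → G) (hd : ∑ i, d i = 0) :
    ∃ s : Fin (m + 1) → G, s - s ∘ (finRotate (m + 1)).symm = d := by
  refine ⟨Fin.partialSum d ∘ Fin.succ, funext fun i => ?_⟩
  induction i using Fin.cases with
  | zero =>
    have h0 : (finRotate (m + 1)).symm 0 = Fin.last m :=
      (Equiv.symm_apply_eq _).2 finRotate_last.symm
    simp only [Pi.sub_apply, Function.comp_apply, h0, Fin.succ_last, Fin.partialSum_last, hd,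
      Fin.partialSum_succ, Fin.castSucc_zero, Fin.partialSum_zero, zero_add, sub_zero]
  | succ k =>
    have hk : (finRotate (m + 1)).symm k.succ = k.castSucc :=
      (Equiv.symm_apply_eq _).2 (by rw [finRotate_apply, Fin.coeSucc_eq_succ])
    simp only [Pi.sub_apply, Function.comp_apply, hk, Fin.partialSum_succ, ← Fin.succ_castSucc]
    abel

theorem exists_perm_sub_comp_eq_of_sum_eq_zero {ι G : Type*} [Fintype ι] [AddCommGroup G]
    (d : ι → G) (hd : ∑ i, d i = 0) : ∃ (σ : Perm ι) (s : ι → G), s - s ∘ σ = d := by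
  cases h : Fintype.card ι with
  | zero =>
    have := Fintype.card_eq_zero_iff.1 h
    exact ⟨1, 0, funext isEmptyElim⟩
  | succ m =>
    let e := Fintype.equivFinOfCardEq h
    obtain ⟨s, hs⟩ := Fin.exists_sub_comp_finRotate_symm_eq (d ∘ e.symm)
      (by rwa [Function.comp_def, Equiv.sum_comp e.symm d])
    refine ⟨(e.trans (finRotate (m + 1)).symm).trans e.symm, s ∘ e, funext fun i => ?_⟩
    simpa using congrFun hs (e i)

namespace Matrix

variable {ι : Type*} [Fintype ι] [DecidableEq ι]

theorem diagonal_sub_diagonal_comp_eq_commutator {R : Type*} [Ring R] (σ : Perm ι) (s : ι → R) :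
    diagonal s - diagonal (s ∘ σ) =
      diagonal s * (σ⁻¹).permMatrix R * σ.permMatrix R -
        σ.permMatrix R * (diagonal s * (σ⁻¹).permMatrix R) := by
  rw [Matrix.mul_assoc, ← permMatrix_mul, mul_inv_cancel, permMatrix_one, Matrix.mul_one,
    Perm.permMatrix, Perm.permMatrix, PEquiv.toMatrix_toPEquiv_mul, PEquiv.mul_toMatrix_toPEquiv,
    submatrix_submatrix, Perm.inv_def, symm_symm, Function.id_comp, Function.comp_id,
    submatrix_diagonal_equiv]

theorem exists_diagonal_eq_commutator {R : Type*} [Ring R] (d : ι → R) (hd : ∑ i, d i = 0) :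
    ∃ x y : Matrix ι ι R, diagonal d = x * y - y * x := by
  obtain ⟨σ, s, rfl⟩ := exists_perm_sub_comp_eq_of_sum_eq_zero d hd
  exact ⟨_, _, (diagonal_sub s (s ∘ σ)).symm.trans (diagonal_sub_diagonal_comp_eq_commutator σ s)⟩

theorem IsHermitian.exists_eq_commutator_of_trace_eq_zero {𝕜 : Type*} [RCLike 𝕜]
    {A : Matrix ι ι 𝕜} (hA : A.IsHermitian) (htr : A.trace = 0) :
    ∃ x y : Matrix ι ι 𝕜, A = x * y - y * x := by
  obtain ⟨x, y, hxy⟩ := exists_diagonal_eq_commutator (RCLike.ofReal ∘ hA.eigenvalues)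
    (hA.trace_eq_sum_eigenvalues ▸ htr)
  let φ := Unitary.conjStarAlgAut 𝕜 _ hA.eigenvectorUnitary
  refine ⟨φ x, φ y, ?_⟩
  rw [hA.spectral_theorem, hxy, map_sub, map_mul, map_mul]

theorem trace_sub_trace_div_card_smul_one {K : Type*} [Field K] [CharZero K]
    (A : Matrix ι ι K) :
    (A - (1 / (Fintype.card ι : K) * A.trace) • (1 : Matrix ι ι K)).trace = 0 := by
  rw [trace_sub, trace_smul, trace_one, smul_eq_mul, one_div_mul_eq_div, div_mul_cancel_of_imp,
    sub_self]
  intro h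
  have : IsEmpty ι := Fintype.card_eq_zero_iff.1 (by exact_mod_cast h)
  simp [trace]

theorem l2_opNorm_one_le {𝕜 : Type*} [RCLike 𝕜] : ‖(1 : Matrix ι ι 𝕜)‖ ≤ 1 := by
  rcases isEmpty_or_nonempty ι with _ | _
  · simp [Subsingleton.elim (1 : Matrix ι ι 𝕜) 0]
  · exact CStarRing.norm_one.le

end Matrix

theorem IsSelfAdjoint.matrix_trace {ι R : Type*} [Fintype ι] [AddCommMonoid R] [StarAddMonoid R]
    {A : Matrix ι ι R} (hA : IsSelfAdjoint A) : IsSelfAdjoint A.trace :=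
  (trace_conjTranspose A).symm.trans (congrArg trace hA)

theorem selfadjoint_matrix_eq_scalar_add_commutator_general (n : ℕ)
    (a : Matrix (Fin n) (Fin n) ℂ) (ha : IsSelfAdjoint a) :
    ∃ c x y : Matrix (Fin n) (Fin n) ℂ, IsSelfAdjoint c ∧
      ‖c‖ ≤ ‖(1 / (n : ℂ)) * Matrix.trace a‖ ∧
      a = c + (x * y - y * x) ∧
      c = ((1 / (n : ℂ)) * Matrix.trace a) • (1 : Matrix (Fin n) (Fin n) ℂ) := by
  set t := 1 / (n : ℂ) * a.trace
  have hc : IsSelfAdjoint (t • 1 : Matrix (Fin n) (Fin n) ℂ) :=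
    (((IsSelfAdjoint.one ℂ).div (.natCast n)).mul ha.matrix_trace).smul (.one _)
  obtain ⟨x, y, hxy⟩ := IsHermitian.exists_eq_commutator_of_trace_eq_zero (ha.sub hc)
    (by simpa only [Fintype.card_fin] using trace_sub_trace_div_card_smul_one a)
  refine ⟨t • 1, x, y, hc, ?_, by rw [← hxy, add_sub_cancel], rfl⟩
  calc ‖t • (1 : Matrix (Fin n) (Fin n) ℂ)‖ ≤ ‖t‖ * ‖(1 : Matrix (Fin n) (Fin n) ℂ)‖ :=
        norm_smul_le _ _
    _ ≤ ‖t‖ := mul_le_of_le_one_right (norm_nonneg _) l2_opNorm_one_le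

/-- A self-adjoint matrix is, up to a scalar multiple of the identity of norm at most
`|tr_n(a)|`, a single commutator: `a = c + [x, y]` with `c = tr_n(a)·1`. -/
theorem selfadjoint_matrix_eq_scalar_add_commutator (n : ℕ) (hn : 1 ≤ n)
    (a : Matrix (Fin n) (Fin n) ℂ) (ha : IsSelfAdjoint a) :
    ∃ c x y : Matrix (Fin n) (Fin n) ℂ, IsSelfAdjoint c ∧
      ‖c‖ ≤ ‖(1 / (n : ℂ)) * Matrix.trace a‖ ∧
      a = c + (x * y - y * x) ∧
      c = ((1 / (n : ℂ)) * Matrix.trace a) • (1 : Matrix (Fin n) (Fin n) ℂ) :=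
  selfadjoint_matrix_eq_scalar_add_commutator_general n a ha
end

section
/- Let B be a C*-algebra, let S be a finite set of tracial states on B, and for x ∈ B set ‖x‖_{2,S} := sup_{τ ∈ S} ‖x‖_{2,τ}. Suppose e₁, …, e_k ∈ B are pairwise orthogonal projections (in a unitization if B is non-unital, with Σ e_i = 1) commuting with elements a₁, …, a_k ∈ B, and suppose τ(e_i a_i* a_i) ≤ ε² τ(e_i) for all τ ∈ S and all i. Then ‖Σ_{i=1}^k e_i a_i‖_{2,τ} ≤ ε for every τ ∈ S. -/
/-!
Orthogonality of the `e i` kills the cross terms of `x* x` for `x = ∑ e i a i`, and since each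
`e i` is a projection commuting with `a i`, the diagonal terms are `e i a i* a i`. Hence
`τ(x* x) = ∑ τ(e i a i* a i) ≤ ε² ∑ τ(e i) = ε² τ(1) ≤ ε²`.
-/

/-- A tracial state on a C*-algebra. -/
def IsTracialState {A : Type*} [NormedRing A] [StarRing A] [CStarRing A]
    [NormedAlgebra ℂ A] [CompleteSpace A] [StarModule ℂ A] (τ : A →L[ℂ] ℂ) : Prop :=
  ‖τ‖ = 1 ∧ (∀ a : A, 0 ≤ (τ (star a * a)).re ∧ (τ (star a * a)).im = 0) ∧
    ∀ a b : A, τ (a * b) = τ (b * a)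

open Finset

theorem star_sum_mul_sum_of_orthogonal {R ι : Type*} [NonUnitalSemiring R] [StarRing R]
    [Fintype ι] (e a : ι → R) (he : ∀ i, IsStarProjection (e i))
    (horth : Pairwise fun i j ↦ e i * e j = 0) (hcomm : ∀ i, Commute (e i) (a i)) :
    star (∑ i, e i * a i) * ∑ i, e i * a i = ∑ i, e i * (star (a i) * a i) := by
  have hterm : ∀ i j, star (e i * a i) * (e j * a j) = star (a i) * (e i * e j) * a j := by
    intro i j
    rw [star_mul, (he i).isSelfAdjoint.star_eq]
    simp only [mul_assoc]
  rw [star_sum, sum_mul_sum]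
  refine sum_congr rfl fun i _ ↦ ?_
  rw [sum_eq_single_of_mem i (mem_univ i) fun j _ hji ↦ by rw [hterm, horth hji.symm]; simp]
  have hcomm_star : Commute (e i) (star (a i)) := by
    simpa only [(he i).isSelfAdjoint.star_eq] using (hcomm i).star_star
  rw [hterm, (he i).isIdempotentElem.eq, ← hcomm_star.eq, mul_assoc]

theorem CStarRing.norm_one_le {A : Type*} [NormedRing A] [StarRing A] [CStarRing A] :
    ‖(1 : A)‖ ≤ 1 := by
  rcases subsingleton_or_nontrivial A with _ | _
  · simp [Subsingleton.elim (1 : A) 0]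
  · exact (CStarRing.norm_one).le

theorem IsTracialState.re_apply_one_le {A : Type*} [NormedRing A] [StarRing A] [CStarRing A]
    [NormedAlgebra ℂ A] [CompleteSpace A] [StarModule ℂ A] {τ : A →L[ℂ] ℂ}
    (hτ : IsTracialState τ) : (τ 1).re ≤ 1 :=
  calc (τ 1).re ≤ ‖τ 1‖ := Complex.re_le_norm _
    _ ≤ ‖τ‖ * ‖(1 : A)‖ := τ.le_opNorm 1
    _ ≤ 1 := by rw [hτ.1, one_mul]; exact CStarRing.norm_one_le

/-- The CPoU gluing estimate: if pairwise orthogonal projections `e_i` summing to `1`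
commute with elements `a_i` and `τ(e_i a_i* a_i) ≤ ε² τ(e_i)` for all `τ` in a finite set
`S` of tracial states, then `‖Σ e_i a_i‖_{2,τ} ≤ ε` for every `τ ∈ S`. -/
theorem cpou_gluing_estimate {B : Type*} [NormedRing B] [StarRing B] [CStarRing B]
    [NormedAlgebra ℂ B] [CompleteSpace B] [StarModule ℂ B]
    (S : Finset (B →L[ℂ] ℂ)) (hS : ∀ τ ∈ S, IsTracialState τ)
    (ε : ℝ) (hε : 0 ≤ ε) (k : ℕ) (e a : Fin k → B)
    (he_proj : ∀ i, IsSelfAdjoint (e i) ∧ e i * e i = e i)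
    (he_orth : ∀ i j, i ≠ j → e i * e j = 0)
    (he_sum : ∑ i, e i = 1)
    (hcomm : ∀ i j, Commute (e i) (a j))
    (hest : ∀ τ ∈ S, ∀ i,
      (τ (e i * (star (a i) * a i))).re ≤ ε ^ 2 * (τ (e i)).re) :
    ∀ τ ∈ S, Real.sqrt ((τ (star (∑ i, e i * a i) * (∑ i, e i * a i))).re) ≤ ε := by
  intro τ hτ
  have hx := star_sum_mul_sum_of_orthogonal e a (fun i ↦ ⟨(he_proj i).2, (he_proj i).1⟩)
    he_orth (fun i ↦ hcomm i i)
  rw [Real.sqrt_le_left hε, hx, map_sum, Complex.re_sum]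
  calc ∑ i, (τ (e i * (star (a i) * a i))).re
      ≤ ∑ i, ε ^ 2 * (τ (e i)).re := sum_le_sum fun i _ ↦ hest τ hτ i
    _ = ε ^ 2 * (τ 1).re := by rw [← mul_sum, ← Complex.re_sum, ← map_sum, he_sum]
    _ ≤ ε ^ 2 := mul_le_of_le_one_right (sq_nonneg ε) (hS τ hτ).re_apply_one_le
end
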